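/- arXiv:2503.03676 — 2 statements merged into one kernel-verified Lean document; each statement's English description precedes it below -/
import Mathlib

section
/- Suppose that for all players i ∈ [n] and all pairs of σ-supported actions j, k ∈ A_i with j ≠ k one has σ_{ij} ≠ σ_{ik}. Then σ is a strict correlated equilibrium (sCE) for the witness utility w, i.e., for every player i, every σ-supported j ∈ A_i, and every k ∈ A_i with k ≠ j, ∑_{a_{-i}} σ_{ij}(a_{-i}) (w_i(j, a_{-i}) − w_i(k, a_{-i})) > 0. -/
open scoped BigOperators

section Prelim

variable {n : ℕ}

/-- Joint action obtained from player `i`'s action `j` and the other players' actions `b`,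
i.e. the joint action `(j, a_{-i})`. -/
def joinA {A : Fin n → Type*} (i : Fin n) (j : A i)
    (b : ∀ l : {l : Fin n // l ≠ i}, A l) : ∀ l, A l :=
  fun l => if h : l = i then h.symm ▸ j else b ⟨l, h⟩

/-- The actions `a_{-i}` of all players other than `i` in the joint action `a`. -/
def restr {A : Fin n → Type*} (i : Fin n) (a : ∀ l, A l) :
    ∀ l : {l : Fin n // l ≠ i}, A l :=
  fun l => a l

/-- `σ` is a mixed strategy: nonnegative and sums to one. -/
def IsMixed {X : Type*} [Fintype X] (σ : X → ℝ) : Prop :=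
  (∀ x, 0 ≤ σ x) ∧ ∑ x, σ x = 1

/-- Marginal probability `p_{ij}` that player `i` plays `j` under `σ`. -/
noncomputable def marg {A : Fin n → Type*} [∀ l, Fintype (A l)]
    (σ : (∀ l, A l) → ℝ) (i : Fin n) (j : A i) : ℝ :=
  ∑ b : ∀ l : {l : Fin n // l ≠ i}, A l, σ (joinA i j b)

/-- Conditional distribution `σ_{ij}` over the other players' actions:
`σ_{ij}(a_{-i}) = σ(j, a_{-i}) / p_{ij}` if `p_{ij} > 0`, and the zero function otherwise. -/
noncomputable def condl {A : Fin n → Type*} [∀ l, Fintype (A l)]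
    (σ : (∀ l, A l) → ℝ) (i : Fin n) (j : A i) :
    (∀ l : {l : Fin n // l ≠ i}, A l) → ℝ :=
  fun b => if 0 < marg σ i j then σ (joinA i j b) / marg σ i j else 0

/-- Euclidean norm `‖·‖₂` on `ℝ^X`. -/
noncomputable def norm2 {X : Type*} [Fintype X] (f : X → ℝ) : ℝ :=
  Real.sqrt (∑ x, f x ^ 2)

/-- Euclidean inner product `⟨·,·⟩` on `ℝ^X`. -/
noncomputable def inner2 {X : Type*} [Fintype X] (f g : X → ℝ) : ℝ :=
  ∑ x, f x * g x

/-- The witness utility `w_i(j, a_{-i}) = σ_{ij}(a_{-i}) / ‖σ_{ij}‖₂` if `p_{ij} > 0`,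
and `0` otherwise. -/
noncomputable def wit {A : Fin n → Type*} [∀ l, Fintype (A l)]
    (σ : (∀ l, A l) → ℝ) (i : Fin n) (a : ∀ l, A l) : ℝ :=
  if 0 < marg σ i (a i) then condl σ i (a i) (restr i a) / norm2 (condl σ i (a i)) else 0

open Classical in
/-- `t_{ijk} = ‖σ_{ij}‖₂ - ⟨σ_{ij}, σ_{ik}⟩ / ‖σ_{ik}‖₂` if `σ_{ik} ≠ 0`,
and `t_{ijk} = ‖σ_{ij}‖₂` if `σ_{ik} = 0`. -/
noncomputable def tq {A : Fin n → Type*} [∀ l, Fintype (A l)]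
    (σ : (∀ l, A l) → ℝ) (i : Fin n) (j k : A i) : ℝ :=
  if condl σ i k = 0 then norm2 (condl σ i j)
  else norm2 (condl σ i j) - inner2 (condl σ i j) (condl σ i k) / norm2 (condl σ i k)

end Prelim

lemma joinA_apply_self {n : ℕ} {A : Fin n → Type*} (i : Fin n) (j : A i)
    (b : ∀ l : {l : Fin n // l ≠ i}, A l) : joinA i j b i = j := by
  simp [joinA]

lemma restr_joinA {n : ℕ} {A : Fin n → Type*} (i : Fin n) (j : A i)
    (b : ∀ l : {l : Fin n // l ≠ i}, A l) : restr i (joinA i j b) = b := by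
  funext l
  simp [restr, joinA, l.2]

lemma condl_sum {n : ℕ} {A : Fin n → Type*} [∀ l, Fintype (A l)]
    (σ : (∀ l, A l) → ℝ) {i : Fin n} {j : A i} (h : 0 < marg σ i j) :
    ∑ b, condl σ i j b = 1 := by
  simp only [condl, if_pos h, ← Finset.sum_div]
  exact div_self h.ne'

lemma condl_nonneg {n : ℕ} {A : Fin n → Type*} [∀ l, Fintype (A l)]
    {σ : (∀ l, A l) → ℝ} (hσ : ∀ x, 0 ≤ σ x) (i : Fin n) (j : A i)
    (b : ∀ l : {l : Fin n // l ≠ i}, A l) : 0 ≤ condl σ i j b := by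
  unfold condl
  split
  · exact div_nonneg (hσ _) (le_of_lt ‹_›)
  · exact le_refl 0

lemma norm2_sq {X : Type*} [Fintype X] (f : X → ℝ) :
    norm2 f ^ 2 = ∑ x, f x ^ 2 :=
  Real.sq_sqrt (Finset.sum_nonneg fun x _ => sq_nonneg _)

lemma norm2_pos {X : Type*} [Fintype X] {f : X → ℝ}
    (hnn : ∀ x, 0 ≤ f x) (hs : ∑ x, f x = 1) : 0 < norm2 f := by
  have hsq : 0 < ∑ x, f x ^ 2 := by
    by_contra h
    push_neg at h
    have h0 : ∑ x, f x ^ 2 = 0 :=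
      le_antisymm h (Finset.sum_nonneg fun x _ => sq_nonneg _)
    have hz : ∀ x, f x = 0 := by
      intro x
      have := (Finset.sum_eq_zero_iff_of_nonneg (fun x _ => sq_nonneg (f x))).1 h0 x
        (Finset.mem_univ x)
      exact pow_eq_zero_iff (two_ne_zero) |>.1 this
    simp [hz] at hs
  exact Real.sqrt_pos.2 hsq

lemma strictCS {X : Type*} [Fintype X] {f g : X → ℝ}
    (hF : 0 < norm2 f) (hG : 0 < norm2 g)
    (hfs : ∑ x, f x = 1) (hgs : ∑ x, g x = 1) (hne : f ≠ g) :
    inner2 f g < norm2 f * norm2 g := by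
  set F := norm2 f with hFdef
  set G := norm2 g with hGdef
  have hS : ∑ x, (f x / F - g x / G) ^ 2 = 2 - 2 * inner2 f g / (F * G) := by
    have e1 : ∀ x, (f x / F - g x / G) ^ 2
        = f x ^ 2 / F ^ 2 - 2 * (f x * g x) / (F * G) + g x ^ 2 / G ^ 2 := by
      intro x; field_simp; ring
    rw [Finset.sum_congr rfl fun x _ => e1 x]
    rw [Finset.sum_add_distrib, Finset.sum_sub_distrib, ← Finset.sum_div, ← Finset.sum_div,
      ← Finset.sum_div, ← norm2_sq f, ← norm2_sq g]
    rw [div_self (pow_ne_zero 2 hF.ne'), div_self (pow_ne_zero 2 hG.ne')]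
    rw [inner2, Finset.mul_sum]
    ring
  have hSpos : 0 < ∑ x, (f x / F - g x / G) ^ 2 := by
    rcases (Finset.sum_nonneg (fun x (_ : x ∈ Finset.univ) => sq_nonneg (f x / F - g x / G))).lt_or_eq with h | h
    · exact h
    · exfalso
      have hz : ∀ x, f x / F - g x / G = 0 := by
        intro x
        have := (Finset.sum_eq_zero_iff_of_nonneg
          (fun x _ => sq_nonneg (f x / F - g x / G))).1 h.symm x (Finset.mem_univ x)
        exact pow_eq_zero_iff two_ne_zero |>.1 this
      have hfg : ∀ x, f x = (F / G) * g x := by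
        intro x
        have := hz x
        field_simp at this ⊢
        linarith [this]
      have hFG : F = G := by
        have hsum : ∑ x, f x = F / G * ∑ x, g x := by
          rw [Finset.mul_sum]
          exact Finset.sum_congr rfl fun x _ => hfg x
        rw [hfs, hgs, mul_one] at hsum
        field_simp at hsum
        linarith
      apply hne
      funext x
      rw [hfg x, hFG, div_self hG.ne', one_mul]
  rw [hS] at hSpos
  have : 2 * inner2 f g / (F * G) < 2 := by linarith
  have hFG : 0 < F * G := mul_pos hF hG
  have h2 : 2 * inner2 f g < 2 * (F * G) := (div_lt_iff₀ hFG).1 this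
  linarith

lemma sum_norm_aux {X : Type*} [Fintype X] {f : X → ℝ} (hF : 0 < norm2 f) :
    ∑ x, f x * (f x / norm2 f) = norm2 f := by
  have : ∀ x, f x * (f x / norm2 f) = f x ^ 2 / norm2 f := fun x => by ring
  rw [Finset.sum_congr rfl fun x _ => this x, ← Finset.sum_div, ← norm2_sq, sq,
    mul_div_assoc, div_self hF.ne', mul_one]



/-- **sCE sufficiency via the witness utility.** If for every player `i` all pairs of
`σ`-supported actions `j ≠ k` have differing conditionals `σ_{ij} ≠ σ_{ik}`, then `σ` is a
strict correlated equilibrium for the witness utility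
`w_i(j, a_{-i}) = σ_{ij}(a_{-i}) / ‖σ_{ij}‖₂`. -/
theorem sCE_of_witness {n : ℕ} {A : Fin n → Type*}
    [∀ l, Fintype (A l)] [∀ l, Nonempty (A l)]
    (σ : (∀ l, A l) → ℝ) (hσ : IsMixed σ)
    (hc : ∀ i : Fin n, ∀ j k : A i, 0 < marg σ i j → 0 < marg σ i k → j ≠ k →
      condl σ i j ≠ condl σ i k) :
    ∀ i : Fin n, ∀ j : A i, 0 < marg σ i j → ∀ k : A i, k ≠ j →
      0 < ∑ b : ∀ l : {l : Fin n // l ≠ i}, A l,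
            condl σ i j b * (wit σ i (joinA i j b) - wit σ i (joinA i k b)) := by
  intro i j hj k hkj
  have hfnn : ∀ b, 0 ≤ condl σ i j b := condl_nonneg hσ.1 i j
  have hfs := condl_sum σ hj
  have hF : 0 < norm2 (condl σ i j) := norm2_pos hfnn hfs
  have hwj : ∀ b, wit σ i (joinA i j b) = condl σ i j b / norm2 (condl σ i j) := by
    intro b
    rw [wit]
    simp only [joinA_apply_self, restr_joinA, if_pos hj]
  by_cases hk : 0 < marg σ i k
  · have hgnn : ∀ b, 0 ≤ condl σ i k b := condl_nonneg hσ.1 i k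
    have hgs := condl_sum σ hk
    have hG : 0 < norm2 (condl σ i k) := norm2_pos hgnn hgs
    have hne := hc i j k hj hk (Ne.symm hkj)
    have hCS := strictCS hF hG hfs hgs hne
    have hwk : ∀ b, wit σ i (joinA i k b) = condl σ i k b / norm2 (condl σ i k) := by
      intro b
      rw [wit]
      simp only [joinA_apply_self, restr_joinA, if_pos hk]
    have hsum : ∑ b, condl σ i j b * (wit σ i (joinA i j b) - wit σ i (joinA i k b))
        = norm2 (condl σ i j)
          - inner2 (condl σ i j) (condl σ i k) / norm2 (condl σ i k) := by
      simp only [hwj, hwk, mul_sub]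
      rw [Finset.sum_sub_distrib, sum_norm_aux hF]
      congr 1
      rw [inner2, Finset.sum_div]
      exact Finset.sum_congr rfl fun b _ => by ring
    rw [hsum, sub_pos]
    exact (div_lt_iff₀ hG).2 hCS
  · have hwk : ∀ b, wit σ i (joinA i k b) = 0 := by
      intro b
      rw [wit]
      simp only [joinA_apply_self, restr_joinA, if_neg hk]
    have hsum : ∑ b, condl σ i j b * (wit σ i (joinA i j b) - wit σ i (joinA i k b))
        = norm2 (condl σ i j) := by
      simp only [hwj, hwk, sub_zero]
      exact sum_norm_aux hF
    rw [hsum]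
    exact hF
end

section
/- Fix a player i ∈ [n] and suppose there exist σ-supported actions j, k ∈ A_i with j ≠ k and σ_{ij} ≠ σ_{ik}. Then for every m ∈ A_i, ∑_{ℓ ∈ A_i} p_{iℓ} · t_{iℓm} ≥ p_{ij} t_{ijm} + p_{ik} t_{ikm} > 0. -/
open scoped BigOperators

/-! Each `t_{iℓm}` is nonnegative by Cauchy–Schwarz, so the full sum dominates the two terms for
`j` and `k`. Since `σ_{ij} ≠ σ_{ik}`, one of them, `σ_{iℓ}`, differs from `σ_{im}`. Both are
probability vectors (or `σ_{im} = 0`), and two distinct probability vectors are never positively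
proportional, so Cauchy–Schwarz is strict for them and `t_{iℓm} > 0`. -/

section Euclidean

variable {X : Type*} [Fintype X]

lemma norm2_eq_norm (f : X → ℝ) : norm2 f = ‖WithLp.toLp 2 f‖ := by
  simp [EuclideanSpace.norm_eq, norm2, sq_abs]

lemma inner2_eq_inner (f g : X → ℝ) :
    inner2 f g = inner ℝ (WithLp.toLp 2 f) (WithLp.toLp 2 g) := by
  simp [inner2, PiLp.inner_apply, mul_comm]

lemma norm2_nonneg (f : X → ℝ) : 0 ≤ norm2 f :=
  Real.sqrt_nonneg _

lemma norm2_pos_s9 {f : X → ℝ} (hf : f ≠ 0) : 0 < norm2 f := by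
  rw [norm2_eq_norm, norm_pos_iff]
  exact fun h => hf (by simpa using congrArg WithLp.ofLp h)

lemma inner2_le_norm2_mul_norm2 (f g : X → ℝ) : inner2 f g ≤ norm2 f * norm2 g := by
  rw [inner2_eq_inner, norm2_eq_norm, norm2_eq_norm]
  exact real_inner_le_norm _ _

lemma inner2_div_norm2_le (f g : X → ℝ) : inner2 f g / norm2 g ≤ norm2 f :=
  div_le_of_le_mul₀ (norm2_nonneg g) (norm2_nonneg f) (inner2_le_norm2_mul_norm2 f g)

lemma eq_of_inner2_eq_norm2_mul_norm2 {f g : X → ℝ} (hf : ∑ x, f x = 1) (hg : ∑ x, g x = 1)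
    (h : inner2 f g = norm2 f * norm2 g) : f = g := by
  rw [inner2_eq_inner, norm2_eq_norm, norm2_eq_norm, inner_eq_norm_mul_iff_real,
    ← norm2_eq_norm, ← norm2_eq_norm] at h
  have hpt : ∀ x, norm2 g * f x = norm2 f * g x := fun x => by
    simpa using congrArg (fun v : EuclideanSpace ℝ X => v x) h
  -- summing the proportionality `‖g‖ f = ‖f‖ g` against `∑ f = ∑ g = 1` forces `‖f‖ = ‖g‖`
  have hnorm : norm2 g = norm2 f := by
    simpa [← Finset.mul_sum, hf, hg] using Finset.sum_congr rfl fun x (_ : x ∈ Finset.univ) => hpt x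
  have hf0 : f ≠ 0 := by
    rintro rfl
    simp at hf
  funext x
  exact mul_left_cancel₀ (norm2_pos_s9 hf0).ne' (hnorm ▸ hpt x)

lemma norm2_sub_inner2_div_pos {f g : X → ℝ} (hf : ∑ x, f x = 1) (hg : ∑ x, g x = 1)
    (hfg : f ≠ g) : 0 < norm2 f - inner2 f g / norm2 g := by
  have hg0 : g ≠ 0 := by
    rintro rfl
    simp at hg
  rw [sub_pos, div_lt_iff₀ (norm2_pos_s9 hg0)]
  exact (inner2_le_norm2_mul_norm2 f g).lt_of_ne
    fun h => hfg (eq_of_inner2_eq_norm2_mul_norm2 hf hg h)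

end Euclidean

section Game

variable {n : ℕ} {A : Fin n → Type*} [∀ l, Fintype (A l)] {σ : (∀ l, A l) → ℝ} {i : Fin n}

lemma marg_nonneg (hσ : ∀ a, 0 ≤ σ a) (l : A i) : 0 ≤ marg σ i l :=
  Finset.sum_nonneg fun _ _ => hσ _

lemma sum_condl {l : A i} (h : 0 < marg σ i l) : ∑ b, condl σ i l b = 1 := by
  simp only [condl, if_pos h, ← Finset.sum_div]
  exact div_self h.ne'

lemma marg_pos_of_condl_ne_zero {l : A i} (h : condl σ i l ≠ 0) : 0 < marg σ i l := by
  by_contra hl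
  exact h (funext fun _ => if_neg hl)

lemma tq_nonneg (σ : (∀ l, A l) → ℝ) (i : Fin n) (l m : A i) : 0 ≤ tq σ i l m := by
  unfold tq
  split
  · exact norm2_nonneg _
  · exact sub_nonneg.2 (inner2_div_norm2_le _ _)

lemma tq_pos {l : A i} (m : A i) (hl : 0 < marg σ i l) (hlm : condl σ i l ≠ condl σ i m) :
    0 < tq σ i l m := by
  unfold tq
  split
  case isTrue =>
    refine norm2_pos_s9 fun h0 => ?_
    simpa [h0] using sum_condl hl
  case isFalse hm =>
    exact norm2_sub_inner2_div_pos (sum_condl hl) (sum_condl (marg_pos_of_condl_ne_zero hm)) hlm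

end Game

theorem sum_marg_tq_pos_general {n : ℕ} {A : Fin n → Type*}
    [∀ l, Fintype (A l)]
    (σ : (∀ l, A l) → ℝ) (hσ : IsMixed σ)
    (i : Fin n) (j k : A i)
    (hj : 0 < marg σ i j) (hk : 0 < marg σ i k)
    (hne : condl σ i j ≠ condl σ i k) :
    ∀ m : A i,
      marg σ i j * tq σ i j m + marg σ i k * tq σ i k m ≤
          ∑ l : A i, marg σ i l * tq σ i l m ∧
        0 < marg σ i j * tq σ i j m + marg σ i k * tq σ i k m := by
  intro m
  have hjk : j ≠ k := by
    rintro rfl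
    exact hne rfl
  have hterm : ∀ l, 0 ≤ marg σ i l * tq σ i l m := fun l =>
    mul_nonneg (marg_nonneg hσ.1 l) (tq_nonneg σ i l m)
  refine ⟨Finset.add_le_sum (fun l _ => hterm l) (Finset.mem_univ j) (Finset.mem_univ k) hjk, ?_⟩
  by_cases hjm : condl σ i j = condl σ i m
  · have hkm : condl σ i k ≠ condl σ i m := fun h => hne (hjm.trans h.symm)
    linarith [hterm j, mul_pos hk (tq_pos m hk hkm)]
  · linarith [hterm k, mul_pos hj (tq_pos m hj hjm)]

/-- **Positivity of the CCE gap.** If player `i` has `σ`-supported actions `j ≠ k` with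
`σ_{ij} ≠ σ_{ik}`, then for every deviation `m ∈ A i`,
`∑_{ℓ} p_{iℓ} t_{iℓm} ≥ p_{ij} t_{ijm} + p_{ik} t_{ikm} > 0`. -/
theorem sum_marg_tq_pos {n : ℕ} {A : Fin n → Type*}
    [∀ l, Fintype (A l)] [∀ l, Nonempty (A l)]
    (σ : (∀ l, A l) → ℝ) (hσ : IsMixed σ)
    (i : Fin n) (j k : A i) (hjk : j ≠ k)
    (hj : 0 < marg σ i j) (hk : 0 < marg σ i k)
    (hne : condl σ i j ≠ condl σ i k) :
    ∀ m : A i,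
      marg σ i j * tq σ i j m + marg σ i k * tq σ i k m ≤
          ∑ l : A i, marg σ i l * tq σ i l m ∧
        0 < marg σ i j * tq σ i j m + marg σ i k * tq σ i k m :=
  sum_marg_tq_pos_general σ hσ i j k hj hk hne
end
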